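/- arXiv:2009.10276 — 2 statements merged into one kernel-verified Lean document; each statement's English description precedes it below -/
import Mathlib

section
/- Let G be an ordered mean. If A₁, …, Aₙ are positive definite operators with mI ≤ Aᵢ ≤ MI for constants 0 < m ≤ M and ω is a positive probability vector, then ∑ᵢ wᵢAᵢ ≤ K·Gₙ(ω; A₁, …, Aₙ), where K = (M + m)²/(4Mm). -/
open ContinuousLinearMap in
/-- A positive definite (positive invertible) bounded operator on a Hilbert space. -/
def IsPosDef {H : Type*} [NormedAddCommGroup H] [InnerProductSpace ℂ H] [CompleteSpace H]
    (A : H →L[ℂ] H) : Prop := A.IsPositive ∧ IsUnit A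

/-- A positive probability vector. -/
def IsProbVec {n : ℕ} (w : Fin n → ℝ) : Prop := (∀ i, 0 < w i) ∧ ∑ i, w i = 1

/-- An ordered mean: a family of weighted means of positive definite operators satisfying
homogeneity, monotonicity, joint concavity and the arithmetic-`G`-harmonic mean inequalities
with respect to the Loewner order. -/
structure OrderedMean (H : Type*) [NormedAddCommGroup H] [InnerProductSpace ℂ H]
    [CompleteSpace H] where
  G : ∀ n : ℕ, (Fin n → ℝ) → (Fin n → (H →L[ℂ] H)) → (H →L[ℂ] H)
  posDef : ∀ n w A, IsProbVec w → (∀ i, IsPosDef (A i)) → IsPosDef (G n w A)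
  homog : ∀ n w A (a : ℝ), IsProbVec w → (∀ i, IsPosDef (A i)) → 0 < a →
    G n w (fun i => a • A i) = a • G n w A
  mono : ∀ n w A B, IsProbVec w → (∀ i, IsPosDef (A i)) → (∀ i, IsPosDef (B i)) →
    (∀ i, B i ≤ A i) → G n w B ≤ G n w A
  concave : ∀ n w A B (s : ℝ), IsProbVec w → (∀ i, IsPosDef (A i)) → (∀ i, IsPosDef (B i)) →
    0 ≤ s → s ≤ 1 →
    (1 - s) • G n w A + s • G n w B ≤ G n w (fun i => (1 - s) • A i + s • B i)
  harm_le : ∀ n w A, IsProbVec w → (∀ i, IsPosDef (A i)) →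
    Ring.inverse (∑ i, w i • Ring.inverse (A i)) ≤ G n w A
  le_arith : ∀ n w A, IsProbVec w → (∀ i, IsPosDef (A i)) →
    G n w A ≤ ∑ i, w i • A i

/-- The parameterized ordered mean `G^μ`. -/
noncomputable def OrderedMean.pMean {H : Type*} [NormedAddCommGroup H] [InnerProductSpace ℂ H]
    [CompleteSpace H] (G : OrderedMean H) (μ : ℝ) (n : ℕ) (w : Fin n → ℝ)
    (A : Fin n → (H →L[ℂ] H)) : H →L[ℂ] H :=
  if 0 ≤ μ then G.G n w (fun i => A i + μ • 1) - μ • 1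
  else Ring.inverse (G.G n w (fun i => Ring.inverse (A i) + (-μ) • 1) - (-μ) • 1)

/-- The constant `ρ_{M,m}(t)`. -/
noncomputable def rhoConst (M m t : ℝ) : ℝ :=
  if M / m ≤ t then (1 - t) * m
  else if t ≤ m / M then (1 - t) * M
  else M + m - 2 * Real.sqrt (t * M * m)

variable {H : Type*} [NormedAddCommGroup H] [InnerProductSpace ℂ H] [CompleteSpace H]

/-! Each `Aᵢ` has spectrum in `[m, M]`, and `(M - x)(x - m) ≥ 0` there gives
`Aᵢ + Mm Aᵢ⁻¹ ≤ M + m`; averaging, `∑ wᵢAᵢ ≤ (M + m) - Mm h` with `h = ∑ wᵢAᵢ⁻¹`.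
AM–GM on the spectrum of `h` bounds `(M + m) - Mm h` by `K h⁻¹`, and `h⁻¹ ≤ Gₙ(ω; A)` is the
harmonic-mean inequality (P4). -/

open Ring

section CStarAlgebra

variable {A : Type*} [CStarAlgebra A] [PartialOrder A] [StarOrderedRing A]

lemma IsStrictlyPositive.cfc_mul_add_mul_inv {a : A} (ha : IsStrictlyPositive a) (s t : ℝ) :
    cfc (fun x : ℝ => s * x + t * x⁻¹) a = s • a + t • a⁻¹ʳ := by
  have hinv : ContinuousOn (fun x : ℝ => x⁻¹) (spectrum ℝ a) :=
    continuousOn_inv₀.mono fun x hx => (ha.spectrum_pos hx).ne'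
  rw [cfc_add a (fun x => s * x) (fun x => t * x⁻¹), cfc_const_mul_id s a,
    cfc_const_mul t _ a hinv, cfc_ringInverse_id (R := ℝ) a ha.isUnit]

lemma add_smul_ringInverse_le {a : A} {m M : ℝ} (hm : 0 < m) (hma : m • (1 : A) ≤ a)
    (haM : a ≤ M • (1 : A)) : a + (M * m) • a⁻¹ʳ ≤ (M + m) • (1 : A) := by
  have ha : IsStrictlyPositive a := (isStrictlyPositive_one.smul hm).of_le hma
  rw [← Algebra.algebraMap_eq_smul_one] at hma haM ⊢
  rw [algebraMap_le_iff_le_spectrum ha.isSelfAdjoint] at hma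
  rw [le_algebraMap_iff_spectrum_le ha.isSelfAdjoint] at haM
  nth_rw 1 [← one_smul ℝ a]
  rw [← ha.cfc_mul_add_mul_inv]
  refine cfc_le_algebraMap _ _ _ (fun x hx => ?_)
    (by fun_prop (disch := exact fun x hx => (ha.spectrum_pos hx).ne'))
  have hx₀ : 0 < x := ha.spectrum_pos hx
  have key : M + m - (1 * x + M * m * x⁻¹) = (M - x) * (x - m) / x := by
    field_simp
    ring
  rw [← sub_nonneg, key]
  exact div_nonneg (mul_nonneg (sub_nonneg.2 (haM x hx)) (sub_nonneg.2 (hma x hx))) hx₀.le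

lemma IsStrictlyPositive.smul_one_le_smul_add_smul_ringInverse {h : A} (hh : IsStrictlyPositive h)
    {c s t : ℝ} (hs : 0 < s) (hc : c ^ 2 ≤ 4 * s * t) : c • (1 : A) ≤ s • h + t • h⁻¹ʳ := by
  rw [← Algebra.algebraMap_eq_smul_one, ← hh.cfc_mul_add_mul_inv]
  refine algebraMap_le_cfc _ _ _ (fun x hx => ?_)
    (by fun_prop (disch := exact fun x hx => (hh.spectrum_pos hx).ne'))
  have hx₀ : 0 < x := hh.spectrum_pos hx
  have key : s * x + t * x⁻¹ - c = ((2 * s * x - c) ^ 2 + (4 * s * t - c ^ 2)) / (4 * s * x) := by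
    field_simp
    ring
  rw [← sub_nonneg, key]
  have hdisc := sub_nonneg.2 hc
  positivity

lemma IsStrictlyPositive.inv_smul_one_le_ringInverse {a : A} (ha : IsStrictlyPositive a) {M : ℝ}
    (haM : a ≤ M • (1 : A)) : M⁻¹ • (1 : A) ≤ a⁻¹ʳ := by
  rw [← Algebra.algebraMap_eq_smul_one] at haM ⊢
  rw [le_algebraMap_iff_spectrum_le ha.isSelfAdjoint] at haM
  rw [← cfc_ringInverse_id (R := ℝ) a ha.isUnit]
  exact algebraMap_le_cfc _ _ _ (fun x hx => inv_anti₀ (ha.spectrum_pos hx) (haM x hx))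
    (continuousOn_inv₀.mono fun x hx => (ha.spectrum_pos hx).ne')

end CStarAlgebra

lemma IsProbVec.sum_smul_const {E : Type*} [AddCommMonoid E] [Module ℝ E] {n : ℕ}
    {w : Fin n → ℝ} (hw : IsProbVec w) (x : E) : ∑ i, w i • x = x := by
  rw [← Finset.sum_smul, hw.2, one_smul]

section OrderedModule

variable {E : Type*} [AddCommGroup E] [PartialOrder E] [IsOrderedAddMonoid E] [Module ℝ E]
  [PosSMulMono ℝ E] {n : ℕ} {w : Fin n → ℝ}

lemma IsProbVec.sum_smul_le_sum_smul (hw : IsProbVec w) {B C : Fin n → E} (h : ∀ i, B i ≤ C i) :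
    ∑ i, w i • B i ≤ ∑ i, w i • C i := by
  gcongr with i
  exacts [(hw.1 i).le, h i]

lemma IsProbVec.le_sum_smul (hw : IsProbVec w) {x : E} {B : Fin n → E} (hB : ∀ i, x ≤ B i) :
    x ≤ ∑ i, w i • B i :=
  (hw.sum_smul_const x).symm.trans_le (hw.sum_smul_le_sum_smul hB)

end OrderedModule

lemma IsPosDef.isStrictlyPositive {A : H →L[ℂ] H} (hA : IsPosDef A) : IsStrictlyPositive A :=
  hA.2.isStrictlyPositive ((ContinuousLinearMap.nonneg_iff_isPositive A).2 hA.1)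

theorem kantorovich_reverse_am_G (G : OrderedMean H) {n : ℕ} (w : Fin n → ℝ)
    (hw : IsProbVec w) (A : Fin n → (H →L[ℂ] H)) (hA : ∀ i, IsPosDef (A i))
    (m M : ℝ) (hm : 0 < m) (hmM : m ≤ M)
    (hbd : ∀ i, m • (1 : H →L[ℂ] H) ≤ A i ∧ A i ≤ M • (1 : H →L[ℂ] H)) :
    ∑ i, w i • A i ≤ ((M + m) ^ 2 / (4 * M * m)) • G.G n w A := by
  have hM : 0 < M := hm.trans_le hmM
  set h := ∑ i, w i • (A i)⁻¹ʳ
  have hh : IsStrictlyPositive h := (isStrictlyPositive_one.smul (inv_pos.2 hM)).of_le <|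
    hw.le_sum_smul fun i => (hA i).isStrictlyPositive.inv_smul_one_le_ringInverse (hbd i).2
  calc ∑ i, w i • A i ≤ ∑ i, w i • ((M + m) • 1 - (M * m) • (A i)⁻¹ʳ) :=
        hw.sum_smul_le_sum_smul fun i =>
          le_sub_iff_add_le.2 (add_smul_ringInverse_le hm (hbd i).1 (hbd i).2)
    _ = (M + m) • 1 - (M * m) • h := by
        simp only [smul_sub, Finset.sum_sub_distrib, hw.sum_smul_const, h, Finset.smul_sum,
          smul_comm (M * m)]
    _ ≤ ((M + m) ^ 2 / (4 * M * m)) • h⁻¹ʳ := by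
        rw [sub_le_iff_le_add']
        refine hh.smul_one_le_smul_add_smul_ringInverse (by positivity) (le_of_eq ?_)
        field_simp
    _ ≤ ((M + m) ^ 2 / (4 * M * m)) • G.G n w A := by
        gcongr
        exact G.harm_le n w A hw hA
end

section
/- Let G be an ordered mean and G^μ the parameterized ordered mean for μ ≥ 0. Then the harmonic–G^μ–arithmetic mean inequalities hold: (∑ᵢ wᵢAᵢ⁻¹)⁻¹ ≤ G^μ(ω; A₁,…,Aₙ) ≤ ∑ᵢ wᵢAᵢ. -/
variable {H : Type*} [NormedAddCommGroup H] [InnerProductSpace ℂ H] [CompleteSpace H]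

/-! Joint concavity together with homogeneity makes `G` superadditive, and the harmonic and
arithmetic bounds force `G` to fix constant families, so `G(A) + μI ≤ G(A + μI)`; combined with
`H(A) ≤ G(A)` this is the lower bound. The upper bound is the arithmetic bound for `A + μI`,
since `∑ wᵢ (Aᵢ + μI) = ∑ wᵢ Aᵢ + μI`. -/

lemma isPosDef_iff_isStrictlyPositive {A : H →L[ℂ] H} : IsPosDef A ↔ IsStrictlyPositive A := by
  rw [IsStrictlyPositive.iff_of_unital, ContinuousLinearMap.nonneg_iff_isPositive]
  rfl

lemma isPosDef_one : IsPosDef (1 : H →L[ℂ] H) :=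
  isPosDef_iff_isStrictlyPositive.mpr isStrictlyPositive_one

lemma IsPosDef.smul {A : H →L[ℂ] H} (hA : IsPosDef A) {c : ℝ} (hc : 0 < c) : IsPosDef (c • A) :=
  isPosDef_iff_isStrictlyPositive.mpr <| (isPosDef_iff_isStrictlyPositive.mp hA).smul hc

lemma IsPosDef.add_smul_one {A : H →L[ℂ] H} (hA : IsPosDef A) {μ : ℝ} (hμ : 0 ≤ μ) :
    IsPosDef (A + μ • 1) :=
  isPosDef_iff_isStrictlyPositive.mpr <|
    (isPosDef_iff_isStrictlyPositive.mp hA).add_nonneg (smul_nonneg hμ zero_le_one)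

namespace IsProbVec

variable {n : ℕ} {w : Fin n → ℝ} {M : Type*} [AddCommGroup M] [Module ℝ M]

lemma sum_smul_const_s10 (hw : IsProbVec w) (c : M) : ∑ i, w i • c = c := by
  rw [← Finset.sum_smul, hw.2, one_smul]

lemma sum_smul_add_const (hw : IsProbVec w) (A : Fin n → M) (c : M) :
    ∑ i, w i • (A i + c) = ∑ i, w i • A i + c := by
  simp only [smul_add, Finset.sum_add_distrib, hw.sum_smul_const_s10]

end IsProbVec

namespace OrderedMean

variable (G : OrderedMean H) {n : ℕ} {w : Fin n → ℝ}

theorem G_const (hw : IsProbVec w) {C : H →L[ℂ] H} (hC : IsPosDef C) :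
    G.G n w (fun _ => C) = C := by
  apply le_antisymm
  · simpa only [hw.sum_smul_const_s10] using G.le_arith n w _ hw fun _ => hC
  · simpa only [hw.sum_smul_const_s10, Ring.inverse_inverse hC.2] using
      G.harm_le n w _ hw fun _ => hC

theorem add_le_G_add (hw : IsProbVec w) {A B : Fin n → H →L[ℂ] H} (hA : ∀ i, IsPosDef (A i))
    (hB : ∀ i, IsPosDef (B i)) : G.G n w A + G.G n w B ≤ G.G n w (A + B) := by
  have h2A : ∀ i, IsPosDef ((2 : ℝ) • A i) := fun i => (hA i).smul two_pos
  have h2B : ∀ i, IsPosDef ((2 : ℝ) • B i) := fun i => (hB i).smul two_pos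
  -- concavity at `s = 1/2` applied to `2A, 2B`; homogeneity pulls the factors `2` out
  have half_two_smul : ∀ T : H →L[ℂ] H, (1 / 2 : ℝ) • (2 : ℝ) • T = T := fun T => by
    rw [smul_smul]; norm_num
  have := G.concave n w _ _ (1 / 2) hw h2A h2B (by norm_num) (by norm_num)
  rw [show (1 : ℝ) - 1 / 2 = 1 / 2 by norm_num, G.homog n w A 2 hw hA two_pos,
    G.homog n w B 2 hw hB two_pos] at this
  simp only [half_two_smul] at this
  exact this

theorem add_smul_one_le_G_add_smul_one (hw : IsProbVec w) {A : Fin n → H →L[ℂ] H}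
    (hA : ∀ i, IsPosDef (A i)) {μ : ℝ} (hμ : 0 ≤ μ) :
    G.G n w A + μ • 1 ≤ G.G n w (fun i => A i + μ • 1) := by
  obtain rfl | hμ := hμ.eq_or_lt
  · simp
  have hC : IsPosDef (μ • (1 : H →L[ℂ] H)) := isPosDef_one.smul hμ
  calc G.G n w A + μ • 1 = G.G n w A + G.G n w (fun _ => μ • 1) := by rw [G.G_const hw hC]
    _ ≤ G.G n w (fun i => A i + μ • 1) := G.add_le_G_add hw hA fun _ => hC

end OrderedMean

theorem pMean_am_hm (G : OrderedMean H) {n : ℕ} (w : Fin n → ℝ) (hw : IsProbVec w)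
    (A : Fin n → (H →L[ℂ] H)) (hA : ∀ i, IsPosDef (A i)) (μ : ℝ) (hμ : 0 ≤ μ) :
    Ring.inverse (∑ i, w i • Ring.inverse (A i)) ≤ G.pMean μ n w A ∧
      G.pMean μ n w A ≤ ∑ i, w i • A i := by
  rw [OrderedMean.pMean, if_pos hμ, le_sub_iff_add_le, sub_le_iff_le_add]
  constructor
  · calc Ring.inverse (∑ i, w i • Ring.inverse (A i)) + μ • 1 ≤ G.G n w A + μ • 1 := by
          gcongr; exact G.harm_le n w A hw hA
      _ ≤ G.G n w (fun i => A i + μ • 1) := G.add_smul_one_le_G_add_smul_one hw hA hμ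
  · calc G.G n w (fun i => A i + μ • 1) ≤ ∑ i, w i • (A i + μ • 1) :=
          G.le_arith n w _ hw fun i => (hA i).add_smul_one hμ
      _ = ∑ i, w i • A i + μ • 1 := hw.sum_smul_add_const A _
end
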